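/- Let G be a cubic graph with perfect matching M, and suppose vertices u, v are joined by two parallel edges and u is matched to u', v is matched to v'. Let G' be the cubic graph obtained by deleting u, v and the two parallel edges and adding a matching edge u'v'. Then the number of 2-factors of G containing M equals twice the number of 2-factors of G' containing M' = (M \ {uu', vv'}) ∪ {u'v'}. -/
import Mathlib

/-- If a vertex `x` has exactly three incident edges and `a, b, c` are three distinct
edges incident to `x`, then every edge incident to `x` is one of `a, b, c`. -/
lemma three_edges {V E : Type*} [Fintype E] [DecidableEq V] [DecidableEq E]
    (ends : E → Sym2 V) (x : V)
    (h3 : (Finset.univ.filter fun e => x ∈ ends e).card = 3)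
    (a b c : E) (hab : a ≠ b) (hac : a ≠ c) (hbc : b ≠ c)
    (ha : x ∈ ends a) (hb : x ∈ ends b) (hc : x ∈ ends c) :
    ∀ e, x ∈ ends e → e = a ∨ e = b ∨ e = c := by
  intro e he
  have hsub : ({a, b, c} : Finset E) ⊆ Finset.univ.filter fun e => x ∈ ends e := by
    intro g hg
    simp only [Finset.mem_insert, Finset.mem_singleton] at hg
    rcases hg with rfl | rfl | rfl <;> simp [ha, hb, hc]
  have hcard : ({a, b, c} : Finset E).card = 3 := by
    rw [Finset.card_insert_of_notMem (by simp [hab, hac]),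
      Finset.card_insert_of_notMem (by simp [hbc]), Finset.card_singleton]
  have heq := Finset.eq_of_subset_of_card_le hsub (by rw [h3, hcard])
  have he' : e ∈ (Finset.univ.filter fun e => x ∈ ends e) := by simp [he]
  rw [← heq] at he'
  simpa using he'

lemma bubble_key {V E : Type*} [Fintype V] [Fintype E] [DecidableEq V] [DecidableEq E]
    (ends : E → Sym2 V) (M : Finset E)
    (hM : ∀ x : V, ∃! e, e ∈ M ∧ x ∈ ends e)
    (hcubic : ∀ x : V, (Finset.univ.filter fun e => x ∈ ends e).card = 3)
    (u v u' v' : V) (f₁ f₂ eu ev : E)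
    (hne : f₁ ≠ f₂)
    (hf₁ : ends f₁ = s(u, v)) (hf₂ : ends f₂ = s(u, v))
    (heu : ends eu = s(u, u')) (hev : ends ev = s(v, v'))
    (heuM : eu ∈ M) (hevM : ev ∈ M)
    (huv : u ≠ v) (hu' : u' ∉ ({u, v} : Set V)) (hv' : v' ∉ ({u, v} : Set V))
    (hu'v' : u' ≠ v') :
    {K : Finset E | (M ⊆ K ∧ ∀ x : V, (K.filter fun e => x ∈ ends e).card = 2) ∧ f₁ ∈ K}.ncard
      = {K : Finset E |
          (∀ e ∈ K, e ≠ f₁ ∧ e ≠ f₂ ∧ e ≠ eu ∧ e ≠ ev) ∧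
          M \ {eu, ev} ⊆ K ∧
          (∀ x : V, x ≠ u → x ≠ v → x ≠ u' → x ≠ v' →
            (K.filter fun e => x ∈ ends e).card = 2) ∧
          (K.filter fun e => u' ∈ ends e).card = 1 ∧
          (K.filter fun e => v' ∈ ends e).card = 1}.ncard := by
  classical
  have hu'u : u' ≠ u := fun h => hu' (by simp [h])
  have hu'v : u' ≠ v := fun h => hu' (by simp [h])
  have hv'u : v' ≠ u := fun h => hv' (by simp [h])
  have hv'v : v' ≠ v := fun h => hv' (by simp [h])
  have mem_f₁ : ∀ x, x ∈ ends f₁ ↔ (x = u ∨ x = v) := fun x => by rw [hf₁]; exact Sym2.mem_iff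
  have mem_f₂ : ∀ x, x ∈ ends f₂ ↔ (x = u ∨ x = v) := fun x => by rw [hf₂]; exact Sym2.mem_iff
  have mem_eu : ∀ x, x ∈ ends eu ↔ (x = u ∨ x = u') := fun x => by rw [heu]; exact Sym2.mem_iff
  have mem_ev : ∀ x, x ∈ ends ev ↔ (x = v ∨ x = v') := fun x => by rw [hev]; exact Sym2.mem_iff
  have hf₁eu : f₁ ≠ eu := by
    intro h
    have hmem : u' ∈ ends f₁ := by rw [h]; exact (mem_eu u').mpr (Or.inr rfl)
    rcases (mem_f₁ u').mp hmem with h' | h'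
    exacts [hu'u h', hu'v h']
  have hf₂eu : f₂ ≠ eu := by
    intro h
    have hmem : u' ∈ ends f₂ := by rw [h]; exact (mem_eu u').mpr (Or.inr rfl)
    rcases (mem_f₂ u').mp hmem with h' | h'
    exacts [hu'u h', hu'v h']
  have hf₁ev : f₁ ≠ ev := by
    intro h
    have hmem : v' ∈ ends f₁ := by rw [h]; exact (mem_ev v').mpr (Or.inr rfl)
    rcases (mem_f₁ v').mp hmem with h' | h'
    exacts [hv'u h', hv'v h']
  have hf₂ev : f₂ ≠ ev := by
    intro h
    have hmem : v' ∈ ends f₂ := by rw [h]; exact (mem_ev v').mpr (Or.inr rfl)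
    rcases (mem_f₂ v').mp hmem with h' | h'
    exacts [hv'u h', hv'v h']
  have heuev : eu ≠ ev := by
    intro h
    have hmem : u' ∈ ends ev := by rw [← h]; exact (mem_eu u').mpr (Or.inr rfl)
    rcases (mem_ev u').mp hmem with h' | h'
    exacts [hu'v h', hu'v' h']
  have huf₁ : u ∈ ends f₁ := (mem_f₁ u).mpr (Or.inl rfl)
  have huf₂ : u ∈ ends f₂ := (mem_f₂ u).mpr (Or.inl rfl)
  have hueu : u ∈ ends eu := (mem_eu u).mpr (Or.inl rfl)
  have hvf₁ : v ∈ ends f₁ := (mem_f₁ v).mpr (Or.inr rfl)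
  have hvf₂ : v ∈ ends f₂ := (mem_f₂ v).mpr (Or.inr rfl)
  have hvev : v ∈ ends ev := (mem_ev v).mpr (Or.inl rfl)
  have hu'eu : u' ∈ ends eu := (mem_eu u').mpr (Or.inr rfl)
  have hv'ev : v' ∈ ends ev := (mem_ev v').mpr (Or.inr rfl)
  have hu_edges : ∀ e, u ∈ ends e → e = f₁ ∨ e = f₂ ∨ e = eu :=
    three_edges ends u (hcubic u) f₁ f₂ eu hne hf₁eu hf₂eu huf₁ huf₂ hueu
  have hv_edges : ∀ e, v ∈ ends e → e = f₁ ∨ e = f₂ ∨ e = ev :=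
    three_edges ends v (hcubic v) f₁ f₂ ev hne hf₁ev hf₂ev hvf₁ hvf₂ hvev
  have hf₁M : f₁ ∉ M := by
    intro h
    obtain ⟨e, _, huniq⟩ := hM u
    exact hf₁eu ((huniq f₁ ⟨h, huf₁⟩).trans (huniq eu ⟨heuM, hueu⟩).symm)
  have hcard3 : ({f₁, f₂, eu} : Finset E).card = 3 := by
    rw [Finset.card_insert_of_notMem (by simp [hne, hf₁eu]),
      Finset.card_insert_of_notMem (by simp [hf₂eu]), Finset.card_singleton]
  have hbij : Set.BijOn (fun K : Finset E => K \ ({f₁, eu, ev} : Finset E))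
      {K : Finset E | (M ⊆ K ∧ ∀ x : V, (K.filter fun e => x ∈ ends e).card = 2) ∧ f₁ ∈ K}
      {K : Finset E |
          (∀ e ∈ K, e ≠ f₁ ∧ e ≠ f₂ ∧ e ≠ eu ∧ e ≠ ev) ∧
          M \ {eu, ev} ⊆ K ∧
          (∀ x : V, x ≠ u → x ≠ v → x ≠ u' → x ≠ v' →
            (K.filter fun e => x ∈ ends e).card = 2) ∧
          (K.filter fun e => u' ∈ ends e).card = 1 ∧
          (K.filter fun e => v' ∈ ends e).card = 1} := by
    refine ⟨?_, ?_, ?_⟩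
    · -- MapsTo
      rintro K ⟨⟨hMK, hdeg⟩, hf₁K⟩
      have hf₂K : f₂ ∉ K := by
        intro hf₂K
        have hsub : ({f₁, f₂, eu} : Finset E) ⊆ K.filter (fun e => u ∈ ends e) := by
          intro g hg
          simp only [Finset.mem_insert, Finset.mem_singleton] at hg
          rcases hg with rfl | rfl | rfl <;>
            simp [Finset.mem_filter, hf₁K, hf₂K, hMK heuM, huf₁, huf₂, hueu]
        have hle := Finset.card_le_card hsub
        rw [hcard3, hdeg u] at hle
        omega
      simp only [Set.mem_setOf_eq]
      refine ⟨?_, ?_, ?_, ?_, ?_⟩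
      · intro e he
        rw [Finset.mem_sdiff] at he
        have heT := he.2
        simp only [Finset.mem_insert, Finset.mem_singleton] at heT
        push_neg at heT
        exact ⟨heT.1, fun h => hf₂K (h ▸ he.1), heT.2.1, heT.2.2⟩
      · intro e he
        simp only [Finset.mem_sdiff, Finset.mem_insert, Finset.mem_singleton] at he
        push_neg at he
        simp only [Finset.mem_sdiff, Finset.mem_insert, Finset.mem_singleton]
        push_neg
        exact ⟨hMK he.1, fun h => hf₁M (h ▸ he.1), he.2.1, he.2.2⟩
      · intro x hxu hxv hxu' hxv'
        have heq : (K \ ({f₁, eu, ev} : Finset E)).filter (fun e => x ∈ ends e)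
            = K.filter (fun e => x ∈ ends e) := by
          ext g
          simp only [Finset.mem_filter, Finset.mem_sdiff, Finset.mem_insert,
            Finset.mem_singleton]
          constructor
          · rintro ⟨⟨h1, _⟩, h2⟩; exact ⟨h1, h2⟩
          · rintro ⟨h1, h2⟩
            refine ⟨⟨h1, ?_⟩, h2⟩
            rintro (rfl | rfl | rfl)
            · rcases (mem_f₁ x).mp h2 with h | h; exacts [hxu h, hxv h]
            · rcases (mem_eu x).mp h2 with h | h; exacts [hxu h, hxu' h]
            · rcases (mem_ev x).mp h2 with h | h; exacts [hxv h, hxv' h]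
        rw [heq, hdeg x]
      · have heq : (K \ ({f₁, eu, ev} : Finset E)).filter (fun e => u' ∈ ends e)
            = (K.filter (fun e => u' ∈ ends e)).erase eu := by
          ext g
          simp only [Finset.mem_filter, Finset.mem_sdiff, Finset.mem_erase,
            Finset.mem_insert, Finset.mem_singleton]
          constructor
          · rintro ⟨⟨h1, h3⟩, h2⟩
            exact ⟨fun h => h3 (Or.inr (Or.inl h)), h1, h2⟩
          · rintro ⟨h3, h1, h2⟩
            refine ⟨⟨h1, ?_⟩, h2⟩
            rintro (rfl | rfl | rfl)
            · rcases (mem_f₁ u').mp h2 with h | h; exacts [hu'u h, hu'v h]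
            · exact h3 rfl
            · rcases (mem_ev u').mp h2 with h | h; exacts [hu'v h, hu'v' h]
        rw [heq, Finset.card_erase_of_mem (by
          simp only [Finset.mem_filter]; exact ⟨hMK heuM, hu'eu⟩), hdeg u']
      · have heq : (K \ ({f₁, eu, ev} : Finset E)).filter (fun e => v' ∈ ends e)
            = (K.filter (fun e => v' ∈ ends e)).erase ev := by
          ext g
          simp only [Finset.mem_filter, Finset.mem_sdiff, Finset.mem_erase,
            Finset.mem_insert, Finset.mem_singleton]
          constructor
          · rintro ⟨⟨h1, h3⟩, h2⟩
            exact ⟨fun h => h3 (Or.inr (Or.inr h)), h1, h2⟩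
          · rintro ⟨h3, h1, h2⟩
            refine ⟨⟨h1, ?_⟩, h2⟩
            rintro (rfl | rfl | rfl)
            · rcases (mem_f₁ v').mp h2 with h | h; exacts [hv'u h, hv'v h]
            · rcases (mem_eu v').mp h2 with h | h; exacts [hv'u h, hu'v' h.symm]
            · exact h3 rfl
        rw [heq, Finset.card_erase_of_mem (by
          simp only [Finset.mem_filter]; exact ⟨hMK hevM, hv'ev⟩), hdeg v']
    · -- InjOn
      rintro K₁ hK₁ K₂ hK₂ h
      simp only [Set.mem_setOf_eq] at hK₁ hK₂
      have h₁ : ({f₁, eu, ev} : Finset E) ⊆ K₁ := by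
        intro g hg
        simp only [Finset.mem_insert, Finset.mem_singleton] at hg
        rcases hg with rfl | rfl | rfl
        exacts [hK₁.2, hK₁.1.1 heuM, hK₁.1.1 hevM]
      have h₂ : ({f₁, eu, ev} : Finset E) ⊆ K₂ := by
        intro g hg
        simp only [Finset.mem_insert, Finset.mem_singleton] at hg
        rcases hg with rfl | rfl | rfl
        exacts [hK₂.2, hK₂.1.1 heuM, hK₂.1.1 hevM]
      have e1 := Finset.sdiff_union_of_subset h₁
      have e2 := Finset.sdiff_union_of_subset h₂
      dsimp only at h
      rw [← e1, ← e2, h]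
    · -- SurjOn
      intro K' hK'
      simp only [Set.mem_setOf_eq] at hK'
      obtain ⟨hK'ne, hK'M, hK'deg, hK'u', hK'v'⟩ := hK'
      have hf₂T : f₂ ∉ ({f₁, eu, ev} : Finset E) := by
        simp [Ne.symm hne, hf₂eu, hf₂ev]
      have hK'u : ∀ e ∈ K', u ∉ ends e := by
        intro e heK' hmem
        rcases hu_edges e hmem with rfl | rfl | rfl
        · exact (hK'ne _ heK').1 rfl
        · exact (hK'ne _ heK').2.1 rfl
        · exact (hK'ne _ heK').2.2.1 rfl
      have hK'v : ∀ e ∈ K', v ∉ ends e := by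
        intro e heK' hmem
        rcases hv_edges e hmem with rfl | rfl | rfl
        · exact (hK'ne _ heK').1 rfl
        · exact (hK'ne _ heK').2.1 rfl
        · exact (hK'ne _ heK').2.2.2 rfl
      refine ⟨K' ∪ ({f₁, eu, ev} : Finset E), ?_, ?_⟩
      · simp only [Set.mem_setOf_eq]
        refine ⟨⟨?_, ?_⟩, Finset.mem_union_right _ (by simp)⟩
        · intro e he
          rcases eq_or_ne e eu with rfl | h1
          · exact Finset.mem_union_right _ (by simp)
          rcases eq_or_ne e ev with rfl | h2
          · exact Finset.mem_union_right _ (by simp)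
          exact Finset.mem_union_left _
            (hK'M (by simp [Finset.mem_sdiff, he, h1, h2]))
        · intro x
          rcases eq_or_ne u x with rfl | gxu
          · have heq : (K' ∪ ({f₁, eu, ev} : Finset E)).filter (fun e => u ∈ ends e)
                = {f₁, eu} := by
              ext g
              simp only [Finset.mem_filter, Finset.mem_union, Finset.mem_insert,
                Finset.mem_singleton]
              constructor
              · rintro ⟨hg | (rfl | rfl | rfl), hmem⟩
                · exact absurd hmem (hK'u g hg)
                · exact Or.inl rfl
                · exact Or.inr rfl
                · rcases (mem_ev u).mp hmem with h | h
                  exacts [absurd h huv, absurd h.symm hv'u]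
              · rintro (rfl | rfl)
                · exact ⟨Or.inr (Or.inl rfl), huf₁⟩
                · exact ⟨Or.inr (Or.inr (Or.inl rfl)), hueu⟩
            rw [heq, Finset.card_insert_of_notMem (by simp [hf₁eu]),
              Finset.card_singleton]
          rcases eq_or_ne v x with rfl | gxv
          · have heq : (K' ∪ ({f₁, eu, ev} : Finset E)).filter (fun e => v ∈ ends e)
                = {f₁, ev} := by
              ext g
              simp only [Finset.mem_filter, Finset.mem_union, Finset.mem_insert,
                Finset.mem_singleton]
              constructor
              · rintro ⟨hg | (rfl | rfl | rfl), hmem⟩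
                · exact absurd hmem (hK'v g hg)
                · exact Or.inl rfl
                · rcases (mem_eu v).mp hmem with h | h
                  exacts [absurd h.symm huv, absurd h.symm hu'v]
                · exact Or.inr rfl
              · rintro (rfl | rfl)
                · exact ⟨Or.inr (Or.inl rfl), hvf₁⟩
                · exact ⟨Or.inr (Or.inr (Or.inr rfl)), hvev⟩
            rw [heq, Finset.card_insert_of_notMem (by simp [hf₁ev]),
              Finset.card_singleton]
          rcases eq_or_ne u' x with rfl | gxu'
          · have heq : (K' ∪ ({f₁, eu, ev} : Finset E)).filter (fun e => u' ∈ ends e)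
                = insert eu (K'.filter fun e => u' ∈ ends e) := by
              ext g
              simp only [Finset.mem_filter, Finset.mem_union, Finset.mem_insert,
                Finset.mem_singleton]
              constructor
              · rintro ⟨hg | (rfl | rfl | rfl), hmem⟩
                · exact Or.inr ⟨hg, hmem⟩
                · rcases (mem_f₁ u').mp hmem with h | h
                  exacts [absurd h hu'u, absurd h hu'v]
                · exact Or.inl rfl
                · rcases (mem_ev u').mp hmem with h | h
                  exacts [absurd h hu'v, absurd h hu'v']
              · rintro (rfl | ⟨hg, hmem⟩)
                · exact ⟨Or.inr (Or.inr (Or.inl rfl)), hu'eu⟩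
                · exact ⟨Or.inl hg, hmem⟩
            rw [heq, Finset.card_insert_of_notMem (fun h =>
              (hK'ne eu (Finset.mem_filter.mp h).1).2.2.1 rfl), hK'u']
          rcases eq_or_ne v' x with rfl | gxv'
          · have heq : (K' ∪ ({f₁, eu, ev} : Finset E)).filter (fun e => v' ∈ ends e)
                = insert ev (K'.filter fun e => v' ∈ ends e) := by
              ext g
              simp only [Finset.mem_filter, Finset.mem_union, Finset.mem_insert,
                Finset.mem_singleton]
              constructor
              · rintro ⟨hg | (rfl | rfl | rfl), hmem⟩
                · exact Or.inr ⟨hg, hmem⟩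
                · rcases (mem_f₁ v').mp hmem with h | h
                  exacts [absurd h hv'u, absurd h hv'v]
                · rcases (mem_eu v').mp hmem with h | h
                  exacts [absurd h hv'u, absurd h.symm hu'v']
                · exact Or.inl rfl
              · rintro (rfl | ⟨hg, hmem⟩)
                · exact ⟨Or.inr (Or.inr (Or.inr rfl)), hv'ev⟩
                · exact ⟨Or.inl hg, hmem⟩
            rw [heq, Finset.card_insert_of_notMem (fun h =>
              (hK'ne ev (Finset.mem_filter.mp h).1).2.2.2 rfl), hK'v']
          · have hxu := gxu.symm
            have hxv := gxv.symm
            have hxu' := gxu'.symm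
            have hxv' := gxv'.symm
            have heq : (K' ∪ ({f₁, eu, ev} : Finset E)).filter (fun e => x ∈ ends e)
                = K'.filter (fun e => x ∈ ends e) := by
              ext g
              simp only [Finset.mem_filter, Finset.mem_union, Finset.mem_insert,
                Finset.mem_singleton]
              constructor
              · rintro ⟨hg | (rfl | rfl | rfl), hmem⟩
                · exact ⟨hg, hmem⟩
                · rcases (mem_f₁ x).mp hmem with h | h; exacts [absurd h hxu, absurd h hxv]
                · rcases (mem_eu x).mp hmem with h | h; exacts [absurd h hxu, absurd h hxu']
                · rcases (mem_ev x).mp hmem with h | h; exacts [absurd h hxv, absurd h hxv']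
              · rintro ⟨hg, hmem⟩; exact ⟨Or.inl hg, hmem⟩
            rw [heq]
            exact hK'deg x hxu hxv hxu' hxv'
      · have hdisj : Disjoint K' ({f₁, eu, ev} : Finset E) := by
          rw [Finset.disjoint_left]
          intro g hg
          obtain ⟨h1, _, h3, h4⟩ := hK'ne g hg
          simp only [Finset.mem_insert, Finset.mem_singleton]
          push_neg
          exact ⟨h1, h3, h4⟩
        ext g
        simp only [Finset.mem_sdiff, Finset.mem_union]
        constructor
        · rintro ⟨hg | hg, hgT⟩
          exacts [hg, absurd hg hgT]
        · intro hg
          exact ⟨Or.inl hg, Finset.disjoint_left.mp hdisj hg⟩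
  rw [← hbij.image_eq, Set.ncard_image_of_injOn hbij.injOn]

/-- Bubble reduction for cubic multigraphs. -/
theorem stmt15 {V E : Type*} [Fintype V] [Fintype E] [DecidableEq V] [DecidableEq E]
    (ends : E → Sym2 V) (M : Finset E)
    (hM : ∀ x : V, ∃! e, e ∈ M ∧ x ∈ ends e)
    (hcubic : ∀ x : V, (Finset.univ.filter fun e => x ∈ ends e).card = 3)
    (u v u' v' : V) (f₁ f₂ eu ev : E)
    (hne : f₁ ≠ f₂)
    (hf₁ : ends f₁ = s(u, v)) (hf₂ : ends f₂ = s(u, v))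
    (heu : ends eu = s(u, u')) (hev : ends ev = s(v, v'))
    (heuM : eu ∈ M) (hevM : ev ∈ M)
    (huv : u ≠ v) (hu' : u' ∉ ({u, v} : Set V)) (hv' : v' ∉ ({u, v} : Set V))
    (hu'v' : u' ≠ v') :
    {K : Finset E | M ⊆ K ∧ ∀ x : V, (K.filter fun e => x ∈ ends e).card = 2}.ncard
      = 2 * {K : Finset E |
          (∀ e ∈ K, e ≠ f₁ ∧ e ≠ f₂ ∧ e ≠ eu ∧ e ≠ ev) ∧
          M \ {eu, ev} ⊆ K ∧
          (∀ x : V, x ≠ u → x ≠ v → x ≠ u' → x ≠ v' →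
            (K.filter fun e => x ∈ ends e).card = 2) ∧
          (K.filter fun e => u' ∈ ends e).card = 1 ∧
          (K.filter fun e => v' ∈ ends e).card = 1}.ncard := by
  classical
  have hu'u : u' ≠ u := fun h => hu' (by simp [h])
  have hu'v : u' ≠ v := fun h => hu' (by simp [h])
  have hv'u : v' ≠ u := fun h => hv' (by simp [h])
  have hv'v : v' ≠ v := fun h => hv' (by simp [h])
  have mem_f₁ : ∀ x, x ∈ ends f₁ ↔ (x = u ∨ x = v) := fun x => by rw [hf₁]; exact Sym2.mem_iff
  have mem_f₂ : ∀ x, x ∈ ends f₂ ↔ (x = u ∨ x = v) := fun x => by rw [hf₂]; exact Sym2.mem_iff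
  have mem_eu : ∀ x, x ∈ ends eu ↔ (x = u ∨ x = u') := fun x => by rw [heu]; exact Sym2.mem_iff
  have hf₁eu : f₁ ≠ eu := by
    intro h
    have hmem : u' ∈ ends f₁ := by rw [h]; exact (mem_eu u').mpr (Or.inr rfl)
    rcases (mem_f₁ u').mp hmem with h' | h'
    exacts [hu'u h', hu'v h']
  have hf₂eu : f₂ ≠ eu := by
    intro h
    have hmem : u' ∈ ends f₂ := by rw [h]; exact (mem_eu u').mpr (Or.inr rfl)
    rcases (mem_f₂ u').mp hmem with h' | h'
    exacts [hu'u h', hu'v h']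
  have huf₁ : u ∈ ends f₁ := (mem_f₁ u).mpr (Or.inl rfl)
  have huf₂ : u ∈ ends f₂ := (mem_f₂ u).mpr (Or.inl rfl)
  have hueu : u ∈ ends eu := (mem_eu u).mpr (Or.inl rfl)
  have hu_edges : ∀ e, u ∈ ends e → e = f₁ ∨ e = f₂ ∨ e = eu :=
    three_edges ends u (hcubic u) f₁ f₂ eu hne hf₁eu hf₂eu huf₁ huf₂ hueu
  have hcard3 : ({f₁, f₂, eu} : Finset E).card = 3 := by
    rw [Finset.card_insert_of_notMem (by simp [hne, hf₁eu]),
      Finset.card_insert_of_notMem (by simp [hf₂eu]), Finset.card_singleton]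
  have hcover : {K : Finset E | M ⊆ K ∧ ∀ x : V, (K.filter fun e => x ∈ ends e).card = 2}
      = {K : Finset E | (M ⊆ K ∧ ∀ x : V, (K.filter fun e => x ∈ ends e).card = 2) ∧ f₁ ∈ K}
        ∪ {K : Finset E |
            (M ⊆ K ∧ ∀ x : V, (K.filter fun e => x ∈ ends e).card = 2) ∧ f₂ ∈ K} := by
    ext K
    simp only [Set.mem_setOf_eq, Set.mem_union]
    constructor
    · intro hK
      have hor : f₁ ∈ K ∨ f₂ ∈ K := by
        by_contra h
        push_neg at h
        have hsub : K.filter (fun e => u ∈ ends e) ⊆ {eu} := by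
          intro g hg
          rw [Finset.mem_filter] at hg
          rcases hu_edges g hg.2 with rfl | rfl | rfl
          · exact absurd hg.1 h.1
          · exact absurd hg.1 h.2
          · simp
        have hle := Finset.card_le_card hsub
        rw [hK.2 u, Finset.card_singleton] at hle
        omega
      tauto
    · rintro (⟨h, _⟩ | ⟨h, _⟩) <;> exact h
  have hdisj : Disjoint
      {K : Finset E | (M ⊆ K ∧ ∀ x : V, (K.filter fun e => x ∈ ends e).card = 2) ∧ f₁ ∈ K}
      {K : Finset E | (M ⊆ K ∧ ∀ x : V, (K.filter fun e => x ∈ ends e).card = 2) ∧ f₂ ∈ K} := by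
    rw [Set.disjoint_left]
    rintro K ⟨⟨hMK, hdeg⟩, hf₁K⟩ ⟨_, hf₂K⟩
    have hsub : ({f₁, f₂, eu} : Finset E) ⊆ K.filter (fun e => u ∈ ends e) := by
      intro g hg
      simp only [Finset.mem_insert, Finset.mem_singleton] at hg
      rcases hg with rfl | rfl | rfl <;>
        simp [Finset.mem_filter, hf₁K, hf₂K, hMK heuM, huf₁, huf₂, hueu]
    have hle := Finset.card_le_card hsub
    rw [hcard3, hdeg u] at hle
    omega
  rw [hcover, Set.ncard_union_eq hdisj (Set.toFinite _) (Set.toFinite _)]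
  rw [bubble_key ends M hM hcubic u v u' v' f₁ f₂ eu ev hne hf₁ hf₂ heu hev heuM hevM
    huv hu' hv' hu'v']
  rw [bubble_key ends M hM hcubic u v u' v' f₂ f₁ eu ev hne.symm hf₂ hf₁ heu hev heuM hevM
    huv hu' hv' hu'v']
  have hseteq : {K : Finset E |
          (∀ e ∈ K, e ≠ f₂ ∧ e ≠ f₁ ∧ e ≠ eu ∧ e ≠ ev) ∧
          M \ {eu, ev} ⊆ K ∧
          (∀ x : V, x ≠ u → x ≠ v → x ≠ u' → x ≠ v' →
            (K.filter fun e => x ∈ ends e).card = 2) ∧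
          (K.filter fun e => u' ∈ ends e).card = 1 ∧
          (K.filter fun e => v' ∈ ends e).card = 1}
      = {K : Finset E |
          (∀ e ∈ K, e ≠ f₁ ∧ e ≠ f₂ ∧ e ≠ eu ∧ e ≠ ev) ∧
          M \ {eu, ev} ⊆ K ∧
          (∀ x : V, x ≠ u → x ≠ v → x ≠ u' → x ≠ v' →
            (K.filter fun e => x ∈ ends e).card = 2) ∧
          (K.filter fun e => u' ∈ ends e).card = 1 ∧
          (K.filter fun e => v' ∈ ends e).card = 1} := by
    ext K
    simp only [Set.mem_setOf_eq]
    have hiff : (∀ e ∈ K, e ≠ f₂ ∧ e ≠ f₁ ∧ e ≠ eu ∧ e ≠ ev)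
        ↔ (∀ e ∈ K, e ≠ f₁ ∧ e ≠ f₂ ∧ e ≠ eu ∧ e ≠ ev) := by
      constructor <;> (intro h e he; have := h e he; tauto)
    rw [hiff]
  rw [hseteq]
  ring
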